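/- Let s and k be integers with 2 ≤ k ≤ s−2 and let f : ℕ → ℝ be any function with f(n) → ∞ as n → ∞. Then there exist a constant C > 0 and an integer n₀ such that for all n ≥ n₀: if G is a K_s-saturated graph on n vertices with N(M_k, G) = sat(n, M_k, K_s), then G has at most C·n·f(n) edges. -/

import Mathlib

/-- `sGraph n k` is the join `S_{n,k}` of the complete graph `K_k` with the empty graph on
`n - k` vertices: the first `k` vertices of `Fin n` form a clique joined to the rest. -/
def sGraph (n k : ℕ) : SimpleGraph (Fin n) where
  Adj i j := i ≠ j ∧ ((i : ℕ) < k ∨ (j : ℕ) < k)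
  symm := ⟨fun i j h => ⟨h.1.symm, h.2.symm⟩⟩
  loopless := ⟨fun i h => h.1 rfl⟩

/-- `G` is `K_s`-saturated: `G` has no `K_s` subgraph, but adding any edge between two
distinct nonadjacent vertices creates one. -/
def IsKSat {V : Type*} (G : SimpleGraph V) (s : ℕ) : Prop :=
  G.CliqueFree s ∧
    ∀ u v : V, u ≠ v → ¬ G.Adj u v →
      ¬ (G ⊔ SimpleGraph.fromEdgeSet {s(u, v)}).CliqueFree s

/-- `numMatchings G k` is the number of copies of `M_k` in `G`, i.e. the number of
`k`-element sets of pairwise disjoint edges of `G`. -/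
noncomputable def numMatchings {V : Type*} (G : SimpleGraph V) (k : ℕ) : ℕ :=
  Set.ncard {M : Finset (Sym2 V) | M.card = k ∧ (∀ e ∈ M, e ∈ G.edgeSet) ∧
    ∀ e ∈ M, ∀ f ∈ M, e ≠ f → ∀ v, v ∈ e → v ∉ f}

/-- `satM n k s` is the minimum number of copies of `M_k` over all `K_s`-saturated graphs
on `n` vertices. -/
noncomputable def satM (n k s : ℕ) : ℕ :=
  sInf {m | ∃ G : SimpleGraph (Fin n), IsKSat G s ∧ numMatchings G k = m}

/-- `numIndepSets G ℓ` is the number of independent sets of size `ℓ` in `G`. -/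
noncomputable def numIndepSets {V : Type*} (G : SimpleGraph V) (ℓ : ℕ) : ℕ :=
  Set.ncard {t : Finset V | t.card = ℓ ∧ ∀ v ∈ t, ∀ w ∈ t, ¬ G.Adj v w}

/-- `numCliques G r` is the number of copies of `K_r` in `G`, i.e. the number of
`r`-element vertex subsets inducing a complete graph. -/
noncomputable def numCliques {V : Type*} (G : SimpleGraph V) (r : ℕ) : ℕ :=
  Set.ncard {t : Finset V | t.card = r ∧ G.IsClique (t : Set V)}


/-!
The join `sGraph n (s - 2)` of `K_{s-2}` with an independent set is `K_s`-saturated and has at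
most `(s - 2) n` edges, so an extremal graph `G` has at most `((s - 2) n)^k` copies of `M_k`.
On the other hand, if `G` has `m` edges, every `j`-matching misses at least `m - 2jn` edges, each
extending it to a `(j + 1)`-matching, and every `(j + 1)`-matching arises in this way from only
`j + 1` of them; hence `G` has at least `(m - 2kn)^k / k!` copies of `M_k`. Comparing the two
bounds gives `m ≤ (2k + k! (s - 2)) n`, which is `O(n f(n))` as soon as `f(n) ≥ 1`.
-/

open Finset SimpleGraph
open scoped Nat

namespace SimpleGraph

variable {V : Type*} [Fintype V] [DecidableEq V] (G : SimpleGraph V) [DecidableRel G.Adj]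

def matchingFinset (k : ℕ) : Finset (Finset (Sym2 V)) :=
  {M ∈ G.edgeFinset.powersetCard k | ∀ e ∈ M, ∀ f ∈ M, e ≠ f → ∀ v, v ∈ e → v ∉ f}

variable {G} in
theorem mem_matchingFinset {k : ℕ} {M : Finset (Sym2 V)} :
    M ∈ G.matchingFinset k ↔ #M = k ∧ (∀ e ∈ M, e ∈ G.edgeSet) ∧
      ∀ e ∈ M, ∀ f ∈ M, e ≠ f → ∀ v, v ∈ e → v ∉ f := by
  simp only [matchingFinset, mem_filter, mem_powersetCard, subset_iff, mem_edgeFinset]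
  tauto

theorem numMatchings_eq_card_matchingFinset (k : ℕ) :
    numMatchings G k = #(G.matchingFinset k) := by
  rw [numMatchings, ← Set.ncard_coe_finset]
  congr 1
  ext M
  simp only [Set.mem_ofPred_eq, mem_coe, mem_matchingFinset]

theorem numMatchings_le_card_edgeFinset_pow (k : ℕ) : numMatchings G k ≤ #G.edgeFinset ^ k := by
  rw [numMatchings_eq_card_matchingFinset]
  calc #(G.matchingFinset k) ≤ #(G.edgeFinset.powersetCard k) := card_filter_le _ _
    _ = (#G.edgeFinset).choose k := card_powersetCard _ _
    _ ≤ #G.edgeFinset ^ k := Nat.choose_le_pow _ _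

theorem card_edgeFinset_sub_le_card_filter_disjoint (M : Finset (Sym2 V)) :
    #G.edgeFinset - 2 * #M * Fintype.card V ≤
      #{e ∈ G.edgeFinset | ∀ f ∈ M, ∀ v, v ∈ e → v ∉ f} := by
  have hmeet : {e ∈ G.edgeFinset | ¬ ∀ f ∈ M, ∀ v, v ∈ e → v ∉ f} ⊆
      M.biUnion fun f => f.toFinset.biUnion fun v => G.incidenceFinset v := by
    intro e he
    simp only [mem_filter, not_forall, not_not] at he
    obtain ⟨he, f, hf, v, hve, hvf⟩ := he
    simp only [mem_biUnion, Sym2.mem_toFinset]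
    exact ⟨f, hf, v, hvf, G.mem_incidenceFinset v e |>.2 ⟨mem_edgeFinset.1 he, hve⟩⟩
  have hcard_meet : #{e ∈ G.edgeFinset | ¬ ∀ f ∈ M, ∀ v, v ∈ e → v ∉ f} ≤
      #M * (2 * Fintype.card V) := by
    refine (card_le_card hmeet).trans (card_biUnion_le_card_mul _ _ _ fun f _ => ?_)
    calc #(f.toFinset.biUnion fun v => G.incidenceFinset v) ≤ #f.toFinset * Fintype.card V :=
          card_biUnion_le_card_mul _ _ _ fun v _ =>
            (G.card_incidenceFinset_eq_degree v).trans_le (G.degree_lt_card_verts v).le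
      _ ≤ 2 * Fintype.card V := by
          gcongr
          rw [Sym2.card_toFinset]
          split_ifs <;> omega
  have := card_filter_add_card_filter_not
    (s := G.edgeFinset) fun e => ∀ f ∈ M, ∀ v, v ∈ e → v ∉ f
  rw [← mul_assoc, mul_comm (#M) 2] at hcard_meet
  omega

theorem card_matchingFinset_mul_le (k : ℕ) :
    #(G.matchingFinset k) * (#G.edgeFinset - 2 * k * Fintype.card V) ≤
      #(G.matchingFinset (k + 1)) * (k + 1) := by
  refine card_mul_le_card_mul (· ⊆ ·) (fun M hM => ?_) fun N hN => ?_
  · obtain ⟨hMk, hME, hMdisj⟩ := mem_matchingFinset.1 hM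
    have hnotMem : ∀ e ∈ {e ∈ G.edgeFinset | ∀ f ∈ M, ∀ v, v ∈ e → v ∉ f}, e ∉ M :=
      fun e he heM => (mem_filter.1 he).2 e heM _ e.out_fst_mem e.out_fst_mem
    rw [← hMk]
    refine (G.card_edgeFinset_sub_le_card_filter_disjoint M).trans
      (card_le_card_of_injOn (fun e => insert e M) (fun e he => ?_) fun e he e' he' hee' => ?_)
    · have hfree := hnotMem e he
      obtain ⟨heE, hedisj⟩ := mem_filter.1 he
      refine mem_filter.2 ⟨mem_matchingFinset.2 ⟨?_, ?_, ?_⟩, subset_insert e M⟩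
      · rw [card_insert_of_notMem hfree, hMk]
      · simpa [forall_mem_insert] using ⟨mem_edgeFinset.1 heE, hME⟩
      · intro g hg g' hg' hgg' v hv
        rcases mem_insert.1 hg with rfl | hgM <;> rcases mem_insert.1 hg' with rfl | hg'M
        · exact absurd rfl hgg'
        · exact hedisj g' hg'M v hv
        · exact fun hv' => hedisj g hgM v hv' hv
        · exact hMdisj g hgM g' hg'M hgg' v hv
    · dsimp only at hee'
      have he_mem : e ∈ insert e' M := hee' ▸ mem_insert_self e M
      exact (mem_insert.1 he_mem).resolve_right (hnotMem e he)
  · calc #{M ∈ G.matchingFinset k | M ⊆ N} ≤ #(N.powersetCard k) :=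
          card_le_card fun M hM => mem_powersetCard.2
            ⟨(mem_filter.1 hM).2, (mem_matchingFinset.1 (mem_filter.1 hM).1).1⟩
      _ = k + 1 := by
          rw [card_powersetCard, (mem_matchingFinset.1 hN).1, Nat.choose_succ_self_right]

theorem pow_sub_le_factorial_mul_card_matchingFinset (k : ℕ) :
    (#G.edgeFinset - 2 * k * Fintype.card V) ^ k ≤ k ! * #(G.matchingFinset k) := by
  induction k with
  | zero => simpa [matchingFinset] using ⟨∅, by simp⟩
  | succ j ih =>
    set m := #G.edgeFinset
    set n := Fintype.card V
    have hmono : m - 2 * (j + 1) * n ≤ m - 2 * j * n := by gcongr; omega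
    calc (m - 2 * (j + 1) * n) ^ (j + 1)
        ≤ (m - 2 * j * n) ^ j * (m - 2 * j * n) := by rw [pow_succ]; gcongr
      _ ≤ j ! * (#(G.matchingFinset j) * (m - 2 * j * n)) := by rw [← mul_assoc]; gcongr
      _ ≤ j ! * (#(G.matchingFinset (j + 1)) * (j + 1)) :=
          Nat.mul_le_mul_left _ (G.card_matchingFinset_mul_le j)
      _ = (j + 1)! * #(G.matchingFinset (j + 1)) := by rw [Nat.factorial_succ]; ring

theorem card_edgeFinset_le_of_numMatchings_le {k B : ℕ} (hk : k ≠ 0)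
    (h : numMatchings G k ≤ B ^ k) : #G.edgeFinset ≤ 2 * k * Fintype.card V + k ! * B := by
  rw [numMatchings_eq_card_matchingFinset] at h
  have hpow : (#G.edgeFinset - 2 * k * Fintype.card V) ^ k ≤ (k ! * B) ^ k :=
    calc _ ≤ k ! * #(G.matchingFinset k) := G.pow_sub_le_factorial_mul_card_matchingFinset k
      _ ≤ k ! * B ^ k := by gcongr
      _ ≤ k ! ^ k * B ^ k := by gcongr; exact Nat.le_self_pow hk _
      _ = (k ! * B) ^ k := (mul_pow _ _ _).symm
  have := (Nat.pow_le_pow_iff_left hk).1 hpow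
  omega

end SimpleGraph

theorem Fin.card_filter_val_lt_le {n t : ℕ} (c : Finset (Fin n)) :
    #(c.filter fun i : Fin n => (i : ℕ) < t) ≤ t :=
  (card_le_card (filter_subset_filter _ (subset_univ c))).trans
    (Fin.card_filter_val_lt.trans_le (min_le_right n t))

theorem sGraph_adj {n t : ℕ} {i j : Fin n} :
    (sGraph n t).Adj i j ↔ i ≠ j ∧ ((i : ℕ) < t ∨ (j : ℕ) < t) := Iff.rfl

theorem card_edgeFinset_sGraph_le (n t : ℕ) [DecidableRel (sGraph n t).Adj] :
    #(sGraph n t).edgeFinset ≤ t * n := by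
  have hcover : (sGraph n t).edgeFinset ⊆
      (univ.filter fun i : Fin n => (i : ℕ) < t).biUnion
        fun i => (sGraph n t).incidenceFinset i := by
    intro e he
    induction e using Sym2.ind with
    | h i j =>
      have hE := (sGraph n t).mem_edgeFinset.1 he
      simp only [mem_biUnion, mem_filter, mem_univ, true_and, mem_incidenceFinset]
      rcases hE.2 with hi | hj
      · exact ⟨i, hi, hE, Sym2.mem_mk_left i j⟩
      · exact ⟨j, hj, hE, Sym2.mem_mk_right i j⟩
  calc #(sGraph n t).edgeFinset
      ≤ #(univ.filter fun i : Fin n => (i : ℕ) < t) * n :=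
        (card_le_card hcover).trans <| card_biUnion_le_card_mul _ _ _ fun i _ =>
          ((sGraph n t).card_incidenceFinset_eq_degree i).trans_le
            (((sGraph n t).degree_lt_card_verts i).le.trans_eq (Fintype.card_fin n))
    _ ≤ t * n := Nat.mul_le_mul_right n (Fin.card_filter_val_lt_le univ)

theorem sGraph_cliqueFree (n t : ℕ) : (sGraph n t).CliqueFree (t + 2) := by
  rintro c ⟨hclique, hcard⟩
  have hhigh : #(c.filter fun i : Fin n => ¬ (i : ℕ) < t) ≤ 1 := card_le_one.2 fun i hi j hj => by
    by_contra hij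
    have hadj_low := (hclique (mem_coe.2 (mem_filter.1 hi).1) (mem_coe.2 (mem_filter.1 hj).1) hij).2
    have hi_high := (mem_filter.1 hi).2
    have hj_high := (mem_filter.1 hj).2
    omega
  have hsplit := card_filter_add_card_filter_not (s := c) fun i : Fin n => (i : ℕ) < t
  have hlow := Fin.card_filter_val_lt_le (t := t) c
  omega

theorem sGraph_isKSat (n t : ℕ) : IsKSat (sGraph n t) (t + 2) := by
  refine ⟨sGraph_cliqueFree n t, fun u v huv hnadj hfree => hfree
    (insert u (insert v (univ.filter fun i : Fin n => (i : ℕ) < t))) ⟨?_, ?_⟩⟩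
  · intro x hx y hy hxy
    simp only [coe_insert, coe_filter, Set.mem_insert_iff, mem_univ, true_and,
      Set.mem_ofPred_eq] at hx hy
    grind [fromEdgeSet_adj, sGraph_adj]
  · have hu : t ≤ (u : ℕ) := not_lt.1 fun hu => hnadj ⟨huv, Or.inl hu⟩
    have hv : t ≤ (v : ℕ) := not_lt.1 fun hv => hnadj ⟨huv, Or.inr hv⟩
    rw [card_insert_of_notMem (by simp [huv]; omega), card_insert_of_notMem (by simp; omega),
      Fin.card_filter_val_lt, min_eq_right (by omega)]

theorem satM_le_numMatchings {n k s : ℕ} {G : SimpleGraph (Fin n)} (hG : IsKSat G s) :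
    satM n k s ≤ numMatchings G k :=
  Nat.sInf_le ⟨G, hG, rfl⟩

theorem numMatchings_sGraph_le (n t k : ℕ) : numMatchings (sGraph n t) k ≤ (t * n) ^ k := by
  classical
  exact ((sGraph n t).numMatchings_le_card_edgeFinset_pow k).trans
    (Nat.pow_le_pow_left (card_edgeFinset_sGraph_le n t) k)

theorem card_edgeFinset_le_of_numMatchings_eq_satM {n k s : ℕ} (hk : k ≠ 0) (hs : 2 ≤ s)
    {G : SimpleGraph (Fin n)} [DecidableRel G.Adj] (hG : numMatchings G k = satM n k s) :
    #G.edgeFinset ≤ (2 * k + k ! * (s - 2)) * n := by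
  have hsat : IsKSat (sGraph n (s - 2)) s := by
    simpa only [Nat.sub_add_cancel hs] using sGraph_isKSat n (s - 2)
  have hE := G.card_edgeFinset_le_of_numMatchings_le hk
    (hG.trans_le <| (satM_le_numMatchings hsat).trans (numMatchings_sGraph_le n (s - 2) k))
  rw [Fintype.card_fin] at hE
  exact hE.trans_eq (by ring)

/-- For `2 ≤ k ≤ s - 2` and any `f(n) → ∞`, every extremal `K_s`-saturated graph (one
minimizing the number of copies of `M_k`) on `n` vertices has `O(n·f(n))` edges. -/
theorem stmt_11 (s k : ℕ) (hk : 2 ≤ k) (hks : k ≤ s - 2) (f : ℕ → ℝ)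
    (hf : Filter.Tendsto f Filter.atTop Filter.atTop) :
    ∃ C : ℝ, 0 < C ∧ ∃ n₀ : ℕ, ∀ n ≥ n₀, ∀ G : SimpleGraph (Fin n),
      IsKSat G s → numMatchings G k = satM n k s →
      (G.edgeSet.ncard : ℝ) ≤ C * n * f n := by
  classical
  obtain ⟨n₀, hn₀⟩ := Filter.eventually_atTop.1 (hf.eventually_ge_atTop 1)
  refine ⟨(2 * k + k ! * (s - 2) : ℕ), Nat.cast_pos.2 (by omega), n₀, fun n hn G _ hG => ?_⟩
  rw [← coe_edgeFinset, Set.ncard_coe_finset]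
  calc (#G.edgeFinset : ℝ) ≤ (2 * k + k ! * (s - 2) : ℕ) * n := by
        exact_mod_cast card_edgeFinset_le_of_numMatchings_eq_satM (by omega) (by omega) hG
    _ ≤ (2 * k + k ! * (s - 2) : ℕ) * n * f n := le_mul_of_one_le_right (by positivity) (hn₀ n hn)
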